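/- Let 0 < r_obs < x_n (i.e., the noise source lies strictly outside the spherical receiver of radius r_obs centered at the origin), and set r_dif = r_obs − x_n and r_sum = r_obs + x_n. Then ∫₀^∞ { (1/2)[erf((r_obs − x_n)/(2√τ)) + erf((r_obs + x_n)/(2√τ))] + (1/x_n)·√(τ/π)·[exp(−r_sum²/(4τ)) − exp(−r_dif²/(4τ))] } dτ = r_obs³/(3 x_n). -/

import Mathlib

/-!
With `H c τ = ½ erf (c / (2√τ)) + x⁻¹ √(τ/π) exp (-c² / (4τ))` (`impactTerm x⁻¹ c τ`) the
integrand is `H (x + r) - H (x - r)`, and each `H c` has an explicit antiderivative in `τ`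
(`impactPrimitive x⁻¹ c`). The integrand is nonnegative: as a function of `r` it vanishes at
`r = 0` and its `r`-derivative is
`r/x · (exp (-(x-r)²/4τ) - exp (-(x+r)²/4τ)) / (2√(πτ)) ≥ 0`.
So the improper integral is the difference of the limits of the antiderivative at `∞` and
`0⁺`. At `0⁺` the erf terms tend to `1` and the Gaussian terms vanish, leaving `-r³/(3x)`.
At `∞` both antiderivatives grow like `√(τ/π) (2τ/(3x) + x/2 - r²/(2x))`, which is even
in `r`, up to `O(τ^{-1/2})` errors coming from `erf z = 2z/√π + O(z³)` and
`exp (-w) = 1 - w + O(w²)`.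
-/

open Real MeasureTheory

/-- The error function `erf a = (2/√π) ∫₀^a exp(−b²) db`. -/
noncomputable def erf (a : ℝ) : ℝ := (2 / Real.sqrt π) * ∫ b in (0:ℝ)..a, Real.exp (-b^2)

open Filter Set Topology

theorem integral_Ioi_of_hasDerivAt_of_nonneg_of_tendsto_nhdsGT {g g' : ℝ → ℝ} {a l₀ l : ℝ}
    (hg₀ : Tendsto g (𝓝[>] a) (𝓝 l₀)) (hderiv : ∀ x ∈ Ioi a, HasDerivAt g (g' x) x)
    (hg' : ∀ x ∈ Ioi a, 0 ≤ g' x) (hg : Tendsto g atTop (𝓝 l)) :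
    ∫ x in Ioi a, g' x = l - l₀ := by
  classical
  have hcont : ContinuousWithinAt (Function.update g a l₀) (Ici a) a := by
    rwa [continuousWithinAt_update_same, ← Ioi_insert,
      insert_sdiff_self_of_notMem self_notMem_Ioi]
  have hupdate : ∀ x ∈ Ioi a, Function.update g a l₀ =ᶠ[𝓝 x] g := fun x hx => by
    filter_upwards [eventually_ne_nhds (ne_of_gt hx)] with y hy using Function.update_of_ne hy _ _
  have hupdate_atTop : Function.update g a l₀ =ᶠ[atTop] g := by
    filter_upwards [eventually_gt_atTop a] with y hy using Function.update_of_ne hy.ne' _ _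
  simpa using integral_Ioi_of_hasDerivAt_of_nonneg hcont
    (fun x hx => (hderiv x hx).congr_of_eventuallyEq (hupdate x hx)) hg'
    (hg.congr' hupdate_atTop.symm)

lemma exists_pos_eq_sq {τ : ℝ} (hτ : 0 < τ) : ∃ v, 0 < v ∧ τ = v ^ 2 :=
  ⟨√τ, sqrt_pos.2 hτ, (sq_sqrt hτ.le).symm⟩

lemma div_two_mul_sqrt_sq (c : ℝ) {τ : ℝ} (hτ : 0 ≤ τ) :
    (c / (2 * √τ)) ^ 2 = c ^ 2 / (4 * τ) := by
  rw [div_pow, mul_pow, sq_sqrt hτ]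
  norm_num

lemma hasDerivAt_erf (a : ℝ) : HasDerivAt erf (2 / √π * exp (-a ^ 2)) a :=
  ((continuous_exp.comp (continuous_pow 2).neg).integral_hasStrictDerivAt 0 a).hasDerivAt.const_mul
    _

lemma erf_neg (a : ℝ) : erf (-a) = -erf a := by
  have h := intervalIntegral.integral_comp_neg (a := 0) (b := a) fun b => exp (-b ^ 2)
  simp only [neg_sq, neg_zero] at h
  rw [erf, erf, intervalIntegral.integral_symm (-a) 0, ← h]
  ring

lemma tendsto_erf_atTop : Tendsto erf atTop (𝓝 1) := by
  have h := intervalIntegral_tendsto_integral_Ioi 0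
    (by simpa using (integrable_exp_neg_mul_sq one_pos).integrableOn (s := Ioi 0)) tendsto_id
  rw [show ∫ b in Ioi (0:ℝ), exp (-b ^ 2) = √π / 2 by simpa using integral_gaussian_Ioi 1] at h
  rw [← show 2 / √π * (√π / 2) = 1 by field_simp]
  exact h.const_mul _

lemma abs_erf_sub_le (z : ℝ) : |√π / 2 * erf z - z| ≤ |z| ^ 3 / 3 := by
  have hgauss : Continuous fun b : ℝ => exp (-b ^ 2) := by fun_prop
  have h : √π / 2 * erf z - z = ∫ b in (0:ℝ)..z, (exp (-b ^ 2) - 1) := by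
    rw [intervalIntegral.integral_sub (hgauss.intervalIntegrable _ _) intervalIntegrable_const,
      erf]
    field_simp
    simp
  have hbound : ∀ b : ℝ, ‖exp (-b ^ 2) - 1‖ ≤ b ^ 2 := fun b => by
    have hexp_le : exp (-b ^ 2) ≤ 1 := exp_le_one_iff.2 (neg_nonpos.2 (sq_nonneg b))
    rw [Real.norm_eq_abs, abs_sub_comm, abs_of_nonneg (sub_nonneg.2 hexp_le)]
    linarith [add_one_le_exp (-b ^ 2)]
  calc |√π / 2 * erf z - z| ≤ |∫ b in (0:ℝ)..z, b ^ 2| := by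
        rw [h]
        simpa using intervalIntegral.norm_integral_le_abs_of_norm_le (μ := volume)
          (Eventually.of_forall hbound) ((continuous_pow 2).intervalIntegrable 0 z)
    _ = |z| ^ 3 / 3 := by norm_num [integral_pow, abs_div, abs_pow]

noncomputable def impactTerm (k c τ : ℝ) : ℝ :=
  1 / 2 * erf (c / (2 * √τ)) + k * √(τ / π) * exp (-c ^ 2 / (4 * τ))

noncomputable def impactPrimitive (k c τ : ℝ) : ℝ :=
  (τ / 2 + c ^ 2 / 4 - k * c ^ 3 / 6) * erf (c / (2 * √τ))
    + √(τ / π) * (c / 2 - k * c ^ 2 / 3 + 2 * k * τ / 3) * exp (-c ^ 2 / (4 * τ))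

lemma hasDerivAt_erf_div_two_mul_sqrt (c : ℝ) {τ : ℝ} (hτ : 0 < τ) :
    HasDerivAt (fun t => erf (c / (2 * √t)))
      (-(c * exp (-c ^ 2 / (4 * τ))) / (2 * √π * τ * √τ)) τ := by
  refine ((hasDerivAt_erf _).comp τ ((hasDerivAt_const τ c).div
    ((hasDerivAt_sqrt hτ.ne').const_mul 2) (by positivity))).congr_deriv ?_
  simp only [Pi.div_apply, div_two_mul_sqrt_sq c hτ.le]
  obtain ⟨v, hv, rfl⟩ := exists_pos_eq_sq hτ
  rw [sqrt_sq hv.le]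
  field_simp
  ring

lemma hasDerivAt_exp_neg_sq_div (c : ℝ) {τ : ℝ} (hτ : τ ≠ 0) :
    HasDerivAt (fun t => exp (-c ^ 2 / (4 * t)))
      (c ^ 2 / (4 * τ ^ 2) * exp (-c ^ 2 / (4 * τ))) τ := by
  refine ((hasDerivAt_const τ (-c ^ 2)).div ((hasDerivAt_id τ).const_mul 4)
    (by simpa)).exp.congr_deriv ?_
  simp only [id, Pi.div_apply]
  field_simp
  ring

lemma hasDerivAt_impactPrimitive (k c : ℝ) {τ : ℝ} (hτ : 0 < τ) :
    HasDerivAt (impactPrimitive k c) (impactTerm k c τ) τ := by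
  have hsqrt : HasDerivAt (fun t => √(t / π)) (1 / (2 * √τ * √π)) τ := by
    refine ((hasDerivAt_sqrt (div_pos hτ pi_pos).ne').comp τ
      ((hasDerivAt_id τ).div_const π)).congr_deriv ?_
    rw [sqrt_div hτ.le]
    field_simp
    simp [pi_pos.le]
  have herf_coef := (((hasDerivAt_id τ).div_const 2).add_const (c ^ 2 / 4)).sub_const
    (k * c ^ 3 / 6)
  have hexp_coef := (((hasDerivAt_id τ).const_mul (2 * k)).div_const 3).const_add
    (c / 2 - k * c ^ 2 / 3)
  refine ((herf_coef.mul (hasDerivAt_erf_div_two_mul_sqrt c hτ)).add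
    ((hsqrt.mul hexp_coef).mul (hasDerivAt_exp_neg_sq_div c hτ.ne'))).congr_deriv ?_
  simp only [id, Pi.mul_apply, impactTerm, sqrt_div hτ.le]
  obtain ⟨v, hv, rfl⟩ := exists_pos_eq_sq hτ
  rw [sqrt_sq hv.le]
  field_simp
  ring

lemma hasDerivAt_impactTerm_distance (k c : ℝ) {τ : ℝ} (hτ : 0 < τ) :
    HasDerivAt (fun c => impactTerm k c τ)
      (exp (-c ^ 2 / (4 * τ)) * (1 - k * c) / (2 * √π * √τ)) c := by
  have herf := (hasDerivAt_erf _).comp c ((hasDerivAt_id c).div_const (2 * √τ))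
  have hexp := (((hasDerivAt_pow 2 c).neg).div_const (4 * τ)).exp
  refine ((herf.const_mul (1 / 2)).add (hexp.const_mul (k * √(τ / π)))).congr_deriv ?_
  simp only [id, Pi.neg_apply, neg_div _ (c ^ 2), div_two_mul_sqrt_sq c hτ.le, sqrt_div hτ.le]
  obtain ⟨v, hv, rfl⟩ := exists_pos_eq_sq hτ
  rw [sqrt_sq hv.le]
  field_simp
  ring

lemma impactTerm_sub_impactTerm_nonneg {x ρ τ : ℝ} (hx : 0 < x) (hρ : 0 ≤ ρ) (hτ : 0 < τ) :
    0 ≤ impactTerm x⁻¹ (x + ρ) τ - impactTerm x⁻¹ (x - ρ) τ := by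
  set h := fun ρ => impactTerm x⁻¹ (x + ρ) τ - impactTerm x⁻¹ (x - ρ) τ
  set h' := fun ρ =>
    ρ / x * (exp (-(x - ρ) ^ 2 / (4 * τ)) - exp (-(x + ρ) ^ 2 / (4 * τ))) / (2 * √π * √τ)
  have hderiv : ∀ ρ, HasDerivAt h (h' ρ) ρ := fun ρ =>
    (((hasDerivAt_impactTerm_distance _ _ hτ).comp ρ ((hasDerivAt_id ρ).const_add x)).sub
      ((hasDerivAt_impactTerm_distance _ _ hτ).comp ρ
        ((hasDerivAt_id ρ).const_sub x))).congr_deriv (by simp only [id, h']; field_simp; ring)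
  have hderiv_nonneg : ∀ ρ ∈ interior (Ici (0 : ℝ)), 0 ≤ h' ρ := by
    intro ρ hρ
    rw [interior_Ici, mem_Ioi] at hρ
    have hexp : exp (-(x + ρ) ^ 2 / (4 * τ)) ≤ exp (-(x - ρ) ^ 2 / (4 * τ)) :=
      exp_le_exp.2 (div_le_div_of_nonneg_right (by nlinarith) (by positivity))
    have hexp_sub := sub_nonneg.2 hexp
    positivity
  have hmono : MonotoneOn h (Ici 0) :=
    monotoneOn_of_hasDerivWithinAt_nonneg (convex_Ici 0)
      (fun ρ _ => (hderiv ρ).continuousAt.continuousWithinAt)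
      (fun ρ _ => (hderiv ρ).hasDerivWithinAt) hderiv_nonneg
  simpa [h] using hmono self_mem_Ici hρ hρ

lemma tendsto_erf_div_two_mul_sqrt_nhdsGT_zero {c : ℝ} (hc : 0 < c) :
    Tendsto (fun τ => erf (c / (2 * √τ))) (𝓝[>] 0) (𝓝 1) := by
  have hsqrt : Tendsto (fun τ => √τ) (𝓝[>] 0) (𝓝[>] 0) :=
    tendsto_nhdsWithin_iff.2
      ⟨(continuous_sqrt.tendsto' 0 0 sqrt_zero).mono_left nhdsWithin_le_nhds,
        eventually_nhdsWithin_of_forall fun τ hτ => sqrt_pos.2 hτ⟩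
  refine tendsto_erf_atTop.comp (((tendsto_inv_nhdsGT_zero.comp hsqrt).const_mul_atTop
    (half_pos hc)).congr fun τ => ?_)
  simp only [Function.comp_apply]
  ring

lemma tendsto_exp_neg_sq_div_nhdsGT_zero {c : ℝ} (hc : c ≠ 0) :
    Tendsto (fun τ => exp (-c ^ 2 / (4 * τ))) (𝓝[>] 0) (𝓝 0) :=
  tendsto_exp_atBot.comp ((tendsto_inv_nhdsGT_zero.const_mul_atTop_of_neg
    (by nlinarith [sq_pos_of_ne_zero hc] : -c ^ 2 / 4 < 0)).congr fun τ => by ring)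

lemma tendsto_impactPrimitive_nhdsGT_zero (k : ℝ) {c : ℝ} (hc : 0 < c) :
    Tendsto (impactPrimitive k c) (𝓝[>] 0) (𝓝 (c ^ 2 / 4 - k * c ^ 3 / 6)) := by
  have hcont : ∀ f : ℝ → ℝ, Continuous f → Tendsto f (𝓝[>] 0) (𝓝 (f 0)) :=
    fun f hf => (hf.tendsto 0).mono_left nhdsWithin_le_nhds
  have h := ((hcont (fun τ => τ / 2 + c ^ 2 / 4 - k * c ^ 3 / 6) (by fun_prop)).mul
    (tendsto_erf_div_two_mul_sqrt_nhdsGT_zero hc)).add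
    ((hcont (fun τ => √(τ / π) * (c / 2 - k * c ^ 2 / 3 + 2 * k * τ / 3)) (by fun_prop)).mul
      (tendsto_exp_neg_sq_div_nhdsGT_zero hc.ne'))
  convert h using 2
  · rfl
  · simp

lemma tendsto_mul_erf_sub_atTop (c : ℝ) :
    Tendsto (fun τ => τ * (√π / 2 * erf (c / (2 * √τ)) - c / (2 * √τ))) atTop (𝓝 0) := by
  refine squeeze_zero_norm' ?_
    ((tendsto_const_nhds (x := |c| ^ 3 / 24)).div_atTop tendsto_sqrt_atTop)
  filter_upwards [eventually_gt_atTop 0] with τ hτ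
  calc ‖τ * (√π / 2 * erf (c / (2 * √τ)) - c / (2 * √τ))‖
      ≤ τ * (|c / (2 * √τ)| ^ 3 / 3) := by
        rw [norm_mul, norm_of_nonneg hτ.le]
        exact mul_le_mul_of_nonneg_left (abs_erf_sub_le _) hτ.le
    _ = |c| ^ 3 / 24 / √τ := by
        obtain ⟨v, hv, rfl⟩ := exists_pos_eq_sq hτ
        rw [sqrt_sq hv.le, abs_div, abs_of_pos (by positivity : 0 < 2 * v)]
        field_simp
        ring

lemma tendsto_mul_exp_sub_atTop (c : ℝ) :
    Tendsto (fun τ => τ * √τ * (exp (-c ^ 2 / (4 * τ)) - 1 + c ^ 2 / (4 * τ))) atTop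
      (𝓝 0) := by
  refine squeeze_zero_norm' ?_
    ((tendsto_const_nhds (x := c ^ 4 / 16)).div_atTop tendsto_sqrt_atTop)
  filter_upwards [eventually_gt_atTop 0, eventually_ge_atTop (c ^ 2 / 4)] with τ hτ hτc
  have hw : |-c ^ 2 / (4 * τ)| ≤ 1 := by
    rw [neg_div, abs_neg, abs_of_nonneg (by positivity), div_le_one (by positivity)]
    linarith
  calc ‖τ * √τ * (exp (-c ^ 2 / (4 * τ)) - 1 + c ^ 2 / (4 * τ))‖
      ≤ τ * √τ * (-c ^ 2 / (4 * τ)) ^ 2 := by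
        rw [norm_mul, norm_of_nonneg (by positivity),
          show c ^ 2 / (4 * τ) = -(-c ^ 2 / (4 * τ)) by ring, ← sub_eq_add_neg]
        exact mul_le_mul_of_nonneg_left (abs_exp_sub_one_sub_id_le hw) (by positivity)
    _ = c ^ 4 / 16 / √τ := by
        obtain ⟨v, hv, rfl⟩ := exists_pos_eq_sq hτ
        rw [sqrt_sq hv.le]
        field_simp
        ring

lemma tendsto_impactPrimitive_sub_atTop (k c : ℝ) :
    Tendsto (fun τ => impactPrimitive k c τ - √(τ / π) * (2 * k * τ / 3 + c - k * c ^ 2 / 2))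
      atTop (𝓝 0) := by
  have herf_coef := ((tendsto_const_nhds (x := c ^ 2 / 4 - k * c ^ 3 / 6)).div_atTop
    tendsto_id).const_add (1 / 2 : ℝ) |>.const_mul (2 / √π)
  have hexp_coef := ((tendsto_const_nhds (x := c / 2 - k * c ^ 2 / 3)).div_atTop
    tendsto_id).const_add (2 * k / 3) |>.const_mul (1 / √π)
  have hinv := (tendsto_inv_atTop_zero.comp tendsto_sqrt_atTop).const_mul
    (((c ^ 2 / 4 - k * c ^ 3 / 6) * c - (c / 2 - k * c ^ 2 / 3) * c ^ 2 / 4) / √π)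
  -- For `τ > 0` the difference is exactly `herf_coef τ * (τ E) + hexp_coef τ * (τ √τ R) + hinv τ`,
  -- with `E`, `R` the erf and exp remainders of the two previous lemmas.
  have h := ((herf_coef.mul (tendsto_mul_erf_sub_atTop c)).add
    (hexp_coef.mul (tendsto_mul_exp_sub_atTop c))).add hinv
  simp only [mul_zero, add_zero] at h
  refine h.congr' ?_
  filter_upwards [eventually_gt_atTop 0] with τ hτ
  simp only [impactPrimitive, Function.comp_apply, id, sqrt_div hτ.le]
  obtain ⟨v, hv, rfl⟩ := exists_pos_eq_sq hτ
  rw [sqrt_sq hv.le]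
  field_simp
  ring

lemma tendsto_impactPrimitive_sub_impactPrimitive_atTop {x : ℝ} (hx : x ≠ 0) (r : ℝ) :
    Tendsto (fun τ => impactPrimitive x⁻¹ (x + r) τ - impactPrimitive x⁻¹ (x - r) τ) atTop
      (𝓝 0) := by
  have hgrowth : ∀ τ, √(τ / π) * (2 * x⁻¹ * τ / 3 + (x + r) - x⁻¹ * (x + r) ^ 2 / 2)
      = √(τ / π) * (2 * x⁻¹ * τ / 3 + (x - r) - x⁻¹ * (x - r) ^ 2 / 2) := fun τ => by
    field_simp
    ring
  have h := (tendsto_impactPrimitive_sub_atTop x⁻¹ (x + r)).sub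
    (tendsto_impactPrimitive_sub_atTop x⁻¹ (x - r))
  rw [sub_zero] at h
  refine h.congr fun τ => ?_
  rw [hgrowth]
  ring

/-- For a noise source strictly outside the receiver, the asymptotic impact in the absence of
advection and molecule degradation is `r_obs³/(3 x_n)`. -/
theorem asymptotic_impact_source_outside_receiver (x_n r_obs r_dif r_sum : ℝ)
    (hr : 0 < r_obs) (hx : r_obs < x_n)
    (hdif : r_dif = r_obs - x_n) (hsum : r_sum = r_obs + x_n) :
    ∫ τ in Set.Ioi (0:ℝ),
      ((1/2) * (erf ((r_obs - x_n) / (2 * Real.sqrt τ))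
                 + erf ((r_obs + x_n) / (2 * Real.sqrt τ)))
        + (1/x_n) * Real.sqrt (τ/π)
            * (Real.exp (-(r_sum^2) / (4*τ)) - Real.exp (-(r_dif^2) / (4*τ))))
    = r_obs^3 / (3*x_n) := by
  subst hdif hsum
  have hx₀ : 0 < x_n := hr.trans hx
  have hintegrand : ∀ τ : ℝ,
      1 / 2 * (erf ((r_obs - x_n) / (2 * √τ)) + erf ((r_obs + x_n) / (2 * √τ)))
        + 1 / x_n * √(τ / π)
            * (exp (-(r_obs + x_n) ^ 2 / (4 * τ)) - exp (-(r_obs - x_n) ^ 2 / (4 * τ)))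
      = impactTerm x_n⁻¹ (x_n + r_obs) τ - impactTerm x_n⁻¹ (x_n - r_obs) τ := fun τ => by
    rw [show r_obs - x_n = -(x_n - r_obs) by ring, add_comm r_obs x_n]
    simp only [impactTerm, neg_div _ (x_n - r_obs), erf_neg, neg_sq]
    ring
  simp only [hintegrand]
  rw [integral_Ioi_of_hasDerivAt_of_nonneg_of_tendsto_nhdsGT
    ((tendsto_impactPrimitive_nhdsGT_zero _ (by linarith)).sub
      (tendsto_impactPrimitive_nhdsGT_zero _ (sub_pos.2 hx)))
    (fun τ hτ => (hasDerivAt_impactPrimitive _ _ hτ).sub (hasDerivAt_impactPrimitive _ _ hτ))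
    (fun τ hτ => impactTerm_sub_impactTerm_nonneg hx₀ hr.le hτ)
    (tendsto_impactPrimitive_sub_impactPrimitive_atTop hx₀.ne' r_obs)]
  field_simp
  ring
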